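/- arXiv:2605.07696 — 4 statements merged into one kernel-verified Lean document; each statement's English description precedes it below -/
import Mathlib

section
/- Let (X,d) be a metric space equipped with a Borel measure μ, let Γ be a countable group acting on X by measure-preserving isometries, and let 𝒟 ⊆ X be a measurable fundamental domain for the action. Let K : X × X → ℝ be measurable and Γ-invariant under the diagonal action, i.e. K(γ·z, γ·w) = K(z, w) for all γ ∈ Γ. Fix r > 0 and a function χ : [0,∞) → [0,1] with χ(x) = 0 whenever x > 1, and define the truncated periodised kernel K^{Γ,r}(z,w) = Σ_{γ∈Γ} K(z, γ·w) · χ(d(z, γ·w)/r). Suppose 𝒟 is partitioned into measurable sets D₁ and D₂ such that: (i) for every z ∈ D₁ and every w ∈ X there is at most one γ ∈ Γ with d(z, γ·w) ≤ r; (ii) for every z ∈ D₂ and every w ∈ X, the number of γ ∈ Γ with d(z, γ·w) ≤ r is at most N; and (iii) μ(B(z,r)) ≤ V for every z ∈ D₂, where B(z,r) is the closed ball of radius r. Then ∫_𝒟 ∫_𝒟 |K^{Γ,r}(z,w)|² dμ(w) dμ(z) ≤ ∫_𝒟 ∫_X |K(z,w)|² dμ(w) dμ(z) + N · V · μ(D₂)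 · sup_{(z,w) ∈ 𝒟 × X} |K(z,w)|². -/
/-!
On `D₁` the truncation leaves at most one nonzero term in the periodised sum, and on `D₂` at
most `N`, so by Cauchy–Schwarz `|K^{Γ,r}(z,w)|² ≤ n · Σ_γ 1_{B(z,r)}(γw) K(z,γw)²` with `n = 1`
or `N`. Integrating in `w` over the fundamental domain unfolds the sum over `Γ` into
`∫_{B(z,r)} K(z,·)²`, which is at most `∫_X K(z,·)²` on `D₁` and at most `V · sup K²` on `D₂`.
-/

open MeasureTheory Metric Set
open scoped ENNReal

lemma ofReal_sq_tsum_le_card_mul_tsum {ι : Type*} (a : ι → ℝ) (t : Finset ι)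
    (ha : ∀ i ∉ t, a i = 0) :
    ENNReal.ofReal ((∑' i, a i) ^ 2) ≤ t.card * ∑' i, ENNReal.ofReal (a i ^ 2) := by
  rw [tsum_eq_sum ha]
  calc ENNReal.ofReal ((∑ i ∈ t, a i) ^ 2)
      ≤ ENNReal.ofReal (t.card * ∑ i ∈ t, a i ^ 2) :=
        ENNReal.ofReal_le_ofReal sq_sum_le_card_mul_sum_sq
    _ = t.card * ∑ i ∈ t, ENNReal.ofReal (a i ^ 2) := by
        rw [ENNReal.ofReal_mul (by positivity), ENNReal.ofReal_natCast,
          ENNReal.ofReal_sum_of_nonneg fun _ _ => sq_nonneg _]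
    _ ≤ t.card * ∑' i, ENNReal.ofReal (a i ^ 2) := by
        gcongr
        exact ENNReal.sum_le_tsum t

lemma setLIntegral_le_add_const_mul_measure {α : Type*} [MeasurableSpace α] {μ : Measure α}
    {s t : Set α} (hs : MeasurableSet s) (ht : MeasurableSet t) (hts : t ⊆ s)
    {F G : α → ℝ≥0∞} {c : ℝ≥0∞} (h : ∀ z ∈ s, F z ≤ G z + t.indicator (fun _ => c) z) :
    ∫⁻ z in s, F z ∂μ ≤ ∫⁻ z in s, G z ∂μ + c * μ t := by
  calc _ ≤ ∫⁻ z in s, G z + t.indicator (fun _ => c) z ∂μ := setLIntegral_mono' hs h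
    _ = _ := by
        rw [lintegral_add_right _ (measurable_const.indicator ht), lintegral_indicator_const ht,
          Measure.restrict_apply ht, inter_eq_left.2 hts]

section Truncation

variable {X : Type*} [PseudoMetricSpace X] {χ : ℝ → ℝ} {r : ℝ}

lemma truncation_eq_zero (hr : 0 < r) (hχsupp : ∀ x, 1 < x → χ x = 0) {z x : X}
    (hx : r < dist z x) : χ (dist z x / r) = 0 :=
  hχsupp _ ((one_lt_div hr).2 hx)

lemma ofReal_sq_mul_truncation_le_indicator (hr : 0 < r) (hχ0 : ∀ x, 0 ≤ χ x)
    (hχ1 : ∀ x, χ x ≤ 1) (hχsupp : ∀ x, 1 < x → χ x = 0) (f : X → ℝ) (z x : X) :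
    ENNReal.ofReal ((f x * χ (dist z x / r)) ^ 2)
      ≤ (closedBall z r).indicator (fun y => ENNReal.ofReal (f y ^ 2)) x := by
  by_cases hx : x ∈ closedBall z r
  · rw [indicator_of_mem hx, mul_pow]
    exact ENNReal.ofReal_le_ofReal
      (mul_le_of_le_one_right (sq_nonneg _) (pow_le_one₀ (hχ0 _) (hχ1 _)))
  · rw [indicator_of_notMem hx]
    rw [mem_closedBall', not_le] at hx
    simp [truncation_eq_zero hr hχsupp hx]

lemma ofReal_sq_tsum_truncation_le {Γ : Type*} [SMul Γ X] (hr : 0 < r) (hχ0 : ∀ x, 0 ≤ χ x)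
    (hχ1 : ∀ x, χ x ≤ 1) (hχsupp : ∀ x, 1 < x → χ x = 0) (f : X → ℝ) (z w : X) {n : ℕ}
    (hn : {γ : Γ | dist z (γ • w) ≤ r}.encard ≤ n) :
    ENNReal.ofReal ((∑' γ : Γ, f (γ • w) * χ (dist z (γ • w) / r)) ^ 2)
      ≤ n * ∑' γ : Γ, (closedBall z r).indicator (fun y => ENNReal.ofReal (f y ^ 2)) (γ • w) := by
  have hfin : {γ : Γ | dist z (γ • w) ≤ r}.Finite := finite_of_encard_le_coe hn
  have hcard : hfin.toFinset.card ≤ n := by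
    rwa [hfin.encard_eq_coe_toFinset_card, Nat.cast_le] at hn
  calc _ ≤ hfin.toFinset.card
          * ∑' γ : Γ, ENNReal.ofReal ((f (γ • w) * χ (dist z (γ • w) / r)) ^ 2) :=
        ofReal_sq_tsum_le_card_mul_tsum _ _ fun γ hγ => by
          rw [truncation_eq_zero hr hχsupp (by simpa using hγ), mul_zero]
    _ ≤ _ := by
        gcongr with γ
        exact ofReal_sq_mul_truncation_le_indicator hr hχ0 hχ1 hχsupp f z _

end Truncation

namespace MeasureTheory.IsFundamentalDomain

lemma setLIntegral_tsum_smul_eq_lintegral {X Γ : Type*} [MeasurableSpace X]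
    [Group Γ] [Countable Γ] [MulAction Γ X] [MeasurableConstSMul Γ X] {μ : Measure X}
    [SMulInvariantMeasure Γ X μ] {𝒟 : Set X} (h : IsFundamentalDomain Γ 𝒟 μ)
    {g : X → ℝ≥0∞} (hg : Measurable g) :
    ∫⁻ w in 𝒟, ∑' γ : Γ, g (γ • w) ∂μ = ∫⁻ w, g w ∂μ :=
  (lintegral_tsum fun γ => (hg.comp (measurable_const_smul γ)).aemeasurable).trans
    (h.lintegral_eq_tsum'' g).symm

lemma setLIntegral_sq_truncatedPeriodization_le {X Γ : Type*}
    [PseudoMetricSpace X] [MeasurableSpace X] [OpensMeasurableSpace X] [Group Γ] [Countable Γ]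
    [MulAction Γ X] [MeasurableConstSMul Γ X] {μ : Measure X} [SMulInvariantMeasure Γ X μ]
    {𝒟 : Set X} (h : IsFundamentalDomain Γ 𝒟 μ) {χ : ℝ → ℝ} {r : ℝ} (hr : 0 < r)
    (hχ0 : ∀ x, 0 ≤ χ x) (hχ1 : ∀ x, χ x ≤ 1) (hχsupp : ∀ x, 1 < x → χ x = 0)
    {f : X → ℝ} (hf : Measurable f) (z : X) (n : ℕ)
    (hn : ∀ w, {γ : Γ | dist z (γ • w) ≤ r}.encard ≤ n) :
    ∫⁻ w in 𝒟, ENNReal.ofReal ((∑' γ : Γ, f (γ • w) * χ (dist z (γ • w) / r)) ^ 2) ∂μ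
      ≤ n * ∫⁻ w in closedBall z r, ENNReal.ofReal (f w ^ 2) ∂μ := by
  have hg : Measurable ((closedBall z r).indicator fun y => ENNReal.ofReal (f y ^ 2)) :=
    (hf.pow_const 2).ennreal_ofReal.indicator measurableSet_closedBall
  calc _ ≤ ∫⁻ w in 𝒟, n * ∑' γ : Γ,
          (closedBall z r).indicator (fun y => ENNReal.ofReal (f y ^ 2)) (γ • w) ∂μ :=
        lintegral_mono fun w => ofReal_sq_tsum_truncation_le hr hχ0 hχ1 hχsupp f z w (hn w)
    _ = _ := by
        rw [lintegral_const_mul' _ _ (ENNReal.natCast_ne_top n),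
          h.setLIntegral_tsum_smul_eq_lintegral hg, lintegral_indicator measurableSet_closedBall]

end MeasureTheory.IsFundamentalDomain

theorem stmt_0_general
    {X : Type*} [MetricSpace X] [MeasurableSpace X] [BorelSpace X]
    (μ : Measure X)
    {Γ : Type*} [Group Γ] [Countable Γ] [MulAction Γ X]
    (hmp : ∀ γ : Γ, MeasurePreserving (fun x : X => γ • x) μ μ)
    (𝒟 : Set X) (h𝒟 : MeasurableSet 𝒟)
    (hfund : IsFundamentalDomain Γ 𝒟 μ)
    (K : X → X → ℝ) (hK : Measurable (fun p : X × X => K p.1 p.2))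
    (r : ℝ) (hr : 0 < r)
    (χ : ℝ → ℝ) (hχ0 : ∀ x, 0 ≤ χ x) (hχ1 : ∀ x, χ x ≤ 1)
    (hχsupp : ∀ x, 1 < x → χ x = 0)
    (D₁ D₂ : Set X) (hD₂ : MeasurableSet D₂)
    (hunion : D₁ ∪ D₂ = 𝒟)
    (N : ℕ) (V : ℝ≥0∞)
    (hone : ∀ z ∈ D₁, ∀ w : X, ({γ : Γ | dist z (γ • w) ≤ r}).Subsingleton)
    (hN : ∀ z ∈ D₂, ∀ w : X, ({γ : Γ | dist z (γ • w) ≤ r}).encard ≤ (N : ℕ∞))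
    (hV : ∀ z ∈ D₂, μ (Metric.closedBall z r) ≤ V) :
    ∫⁻ z in 𝒟, ∫⁻ w in 𝒟,
        ENNReal.ofReal ((∑' γ : Γ, K z (γ • w) * χ (dist z (γ • w) / r)) ^ 2) ∂μ ∂μ
      ≤ (∫⁻ z in 𝒟, ∫⁻ w, ENNReal.ofReal ((K z w) ^ 2) ∂μ ∂μ)
        + (N : ℝ≥0∞) * V * μ D₂ * ⨆ z ∈ 𝒟, ⨆ w : X, ENNReal.ofReal ((K z w) ^ 2) := by
  have : MeasurableConstSMul Γ X := ⟨fun γ => (hmp γ).measurable⟩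
  have : SMulInvariantMeasure Γ X μ :=
    ⟨fun γ _ hs => (hmp γ).measure_preimage hs.nullMeasurableSet⟩
  set S := ⨆ z ∈ 𝒟, ⨆ w : X, ENNReal.ofReal ((K z w) ^ 2)
  have hKz : ∀ z, Measurable (K z) := fun z => hK.comp measurable_prodMk_left
  have bound : ∀ z ∈ 𝒟,
      ∫⁻ w in 𝒟, ENNReal.ofReal ((∑' γ : Γ, K z (γ • w) * χ (dist z (γ • w) / r)) ^ 2) ∂μ
        ≤ ∫⁻ w, ENNReal.ofReal ((K z w) ^ 2) ∂μ + D₂.indicator (fun _ => N * V * S) z := by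
    intro z hz
    rcases hunion ▸ hz with hz₁ | hz₂
    · have hn : ∀ w, {γ : Γ | dist z (γ • w) ≤ r}.encard ≤ (1 : ℕ) := fun w => by
        simpa using encard_le_one_iff_subsingleton.2 (hone z hz₁ w)
      calc _ ≤ (1 : ℕ) * ∫⁻ w in closedBall z r, ENNReal.ofReal (K z w ^ 2) ∂μ :=
            hfund.setLIntegral_sq_truncatedPeriodization_le hr hχ0 hχ1 hχsupp (hKz z) z 1 hn
        _ ≤ ∫⁻ w, ENNReal.ofReal ((K z w) ^ 2) ∂μ := by
            rw [Nat.cast_one, one_mul]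
            exact setLIntegral_le_lintegral _ _
        _ ≤ _ := le_self_add
    · calc _ ≤ N * ∫⁻ w in closedBall z r, ENNReal.ofReal (K z w ^ 2) ∂μ :=
            hfund.setLIntegral_sq_truncatedPeriodization_le hr hχ0 hχ1 hχsupp (hKz z) z N
              (hN z hz₂)
        _ ≤ N * ∫⁻ _ in closedBall z r, S ∂μ := by
            gcongr with w
            exact le_iSup₂_of_le z hz (le_iSup (fun w => ENNReal.ofReal (K z w ^ 2)) w)
        _ ≤ N * V * S := by
            rw [setLIntegral_const, mul_assoc, mul_comm S]
            gcongr
            exact hV z hz₂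
        _ = D₂.indicator (fun _ => N * V * S) z := (indicator_of_mem hz₂ (fun _ => _)).symm
        _ ≤ _ := le_add_self
  rw [mul_right_comm]
  exact setLIntegral_le_add_const_mul_measure h𝒟 hD₂ (hunion ▸ subset_union_right) bound

/-- Hilbert–Schmidt bound for the truncated periodised kernel over a fundamental domain. -/
theorem stmt_0
    {X : Type*} [MetricSpace X] [MeasurableSpace X] [BorelSpace X]
    (μ : Measure X)
    {Γ : Type*} [Group Γ] [Countable Γ] [MulAction Γ X]
    (hiso : ∀ γ : Γ, Isometry (fun x : X => γ • x))
    (hmp : ∀ γ : Γ, MeasurePreserving (fun x : X => γ • x) μ μ)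
    (𝒟 : Set X) (h𝒟 : MeasurableSet 𝒟)
    (hfund : IsFundamentalDomain Γ 𝒟 μ)
    (K : X → X → ℝ) (hK : Measurable (fun p : X × X => K p.1 p.2))
    (hKinv : ∀ (γ : Γ) (z w : X), K (γ • z) (γ • w) = K z w)
    (r : ℝ) (hr : 0 < r)
    (χ : ℝ → ℝ) (hχ0 : ∀ x, 0 ≤ χ x) (hχ1 : ∀ x, χ x ≤ 1)
    (hχsupp : ∀ x, 1 < x → χ x = 0)
    (D₁ D₂ : Set X) (hD₁ : MeasurableSet D₁) (hD₂ : MeasurableSet D₂)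
    (hunion : D₁ ∪ D₂ = 𝒟) (hdisj : Disjoint D₁ D₂)
    (N : ℕ) (V : ℝ≥0∞)
    (hone : ∀ z ∈ D₁, ∀ w : X, ({γ : Γ | dist z (γ • w) ≤ r}).Subsingleton)
    (hN : ∀ z ∈ D₂, ∀ w : X, ({γ : Γ | dist z (γ • w) ≤ r}).encard ≤ (N : ℕ∞))
    (hV : ∀ z ∈ D₂, μ (Metric.closedBall z r) ≤ V) :
    ∫⁻ z in 𝒟, ∫⁻ w in 𝒟,
        ENNReal.ofReal ((∑' γ : Γ, K z (γ • w) * χ (dist z (γ • w) / r)) ^ 2) ∂μ ∂μ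
      ≤ (∫⁻ z in 𝒟, ∫⁻ w, ENNReal.ofReal ((K z w) ^ 2) ∂μ ∂μ)
        + (N : ℝ≥0∞) * V * μ D₂ * ⨆ z ∈ 𝒟, ⨆ w : X, ENNReal.ofReal ((K z w) ^ 2) :=
  stmt_0_general μ hmp 𝒟 h𝒟 hfund K hK r hr χ hχ0 hχ1 hχsupp D₁ D₂ hD₂ hunion N V hone hN hV
end

section
/- For every compact interval I ⊂ (0,∞) there exists a constant C_I > 0 such that for every r > 1 and every λ ∈ I, the function u ↦ cos(λu)·(cosh r − cosh u)^{−1/2} is integrable on [0,r) and |∫_0^r cos(λu)·(cosh r − cosh u)^{−1/2} du| ≤ C_I · e^{−r/2}. -/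
/-!
Write `D u = cosh r - cosh u = 2 sinh ((r + u) / 2) sinh ((r - u) / 2)` and split `[0, r)` at
`r - 1`. On `[r - 1, r)` the first factor is of size `e ^ r` and the second is at least
`(r - u) / 2`, so `D u ≳ e ^ r (r - u)`: the integrand is bounded by
`e ^ (-r / 2) (r - u) ^ (-1 / 2)`, whose integral is `O (e ^ (-r / 2))`. On `[0, r - 1]` the weight
`D ^ (-1 / 2)` is increasing, so integrating `cos (λ u)` by parts against it gives a bound
`2 D (r - 1) ^ (-1 / 2) / λ`, again `O (e ^ (-r / 2) / λ)`.
-/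

open MeasureTheory Set Real

namespace Real

theorem cosh_sub_cosh_eq (x y : ℝ) :
    cosh x - cosh y = 2 * sinh ((x + y) / 2) * sinh ((x - y) / 2) := by
  have hadd := cosh_add ((x + y) / 2) ((x - y) / 2)
  have hsub := cosh_sub ((x + y) / 2) ((x - y) / 2)
  rw [show (x + y) / 2 + (x - y) / 2 = x by ring] at hadd
  rw [show (x + y) / 2 - (x - y) / 2 = y by ring] at hsub
  linarith

theorem cosh_sub_cosh_pos {r u : ℝ} (hu : |u| < r) : 0 < cosh r - cosh u :=
  sub_pos.mpr (cosh_lt_cosh.mpr (hu.trans_le (le_abs_self r)))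

theorem exp_div_four_le_sinh {x : ℝ} (hx : log 2 ≤ 2 * x) : exp x / 4 ≤ sinh x := by
  have h2 : 2 ≤ exp x * exp x := by
    rw [← exp_add, ← two_mul]
    calc (2 : ℝ) = exp (log 2) := (exp_log two_pos).symm
      _ ≤ exp (2 * x) := exp_le_exp.mpr hx
  have hinv : exp (-x) * exp x = 1 := by rw [← exp_add, neg_add_cancel, exp_zero]
  rw [sinh_eq]
  nlinarith [exp_pos x, exp_pos (-x)]

theorem sinh_mul_sub_le_cosh_sub_cosh {r u : ℝ} (hur : u ≤ r) (hru : 0 ≤ r + u) :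
    sinh ((r + u) / 2) * (r - u) ≤ cosh r - cosh u := by
  have h1 : 0 ≤ sinh ((r + u) / 2) := sinh_nonneg_iff.mpr (by linarith)
  have h2 : (r - u) / 2 ≤ sinh ((r - u) / 2) := self_le_sinh_iff.mpr (by linarith)
  rw [cosh_sub_cosh_eq]
  nlinarith [mul_le_mul_of_nonneg_left h2 h1]

theorem exp_mul_sub_le_cosh_sub_cosh {r u : ℝ} (hr : 1 ≤ r) (hu : r - 1 ≤ u) (hur : u ≤ r) :
    exp (r - 1 / 2) / 4 * (r - u) ≤ cosh r - cosh u := by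
  refine le_trans (mul_le_mul_of_nonneg_right ?_ (by linarith))
    (sinh_mul_sub_le_cosh_sub_cosh hur (by linarith))
  calc exp (r - 1 / 2) / 4 ≤ exp ((r + u) / 2) / 4 := by gcongr; linarith
    _ ≤ sinh ((r + u) / 2) := exp_div_four_le_sinh (by linarith [log_two_lt_d9])

theorem inv_sqrt_cosh_sub_cosh_le {r u : ℝ} (hr : 1 ≤ r) (hu : r - 1 ≤ u) (hur : u < r) :
    (√(cosh r - cosh u))⁻¹ ≤ 2 * exp (1 / 4) * exp (-r / 2) * (√(r - u))⁻¹ := by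
  have hsqrt : √(exp (r - 1 / 2) / 4) = (2 * exp (1 / 4) * exp (-r / 2))⁻¹ := by
    rw [sqrt_eq_iff_eq_sq (by positivity) (by positivity), mul_assoc, ← exp_add,
      mul_inv, ← exp_neg, mul_pow, ← exp_nat_mul]
    ring_nf
  calc (√(cosh r - cosh u))⁻¹ ≤ (√(exp (r - 1 / 2) / 4 * (r - u)))⁻¹ :=
        inv_anti₀ (sqrt_pos.mpr (mul_pos (by positivity) (by linarith)))
          (sqrt_le_sqrt (exp_mul_sub_le_cosh_sub_cosh hr hu hur.le))
    _ = 2 * exp (1 / 4) * exp (-r / 2) * (√(r - u))⁻¹ := by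
        rw [sqrt_mul (by positivity), mul_inv, hsqrt, inv_inv]

theorem hasDerivAt_inv_sqrt_cosh_sub_cosh {r u : ℝ} (hu : |u| < r) :
    HasDerivAt (fun v => (√(cosh r - cosh v))⁻¹)
      (sinh u / (2 * √(cosh r - cosh u) ^ 3)) u := by
  have hD := cosh_sub_cosh_pos hu
  refine ((((hasDerivAt_cosh u).const_sub (cosh r)).sqrt hD.ne').inv
    (sqrt_pos.mpr hD).ne').congr_deriv ?_
  field_simp

theorem inv_sqrt_eq_rpow {t : ℝ} (ht : 0 ≤ t) : (√t)⁻¹ = t ^ (-(1 / 2) : ℝ) := by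
  rw [rpow_neg ht, sqrt_eq_rpow]

end Real

theorem intervalIntegrable_inv_sqrt {x : ℝ} (hx : 0 ≤ x) :
    IntervalIntegrable (fun t => (√t)⁻¹) volume 0 x :=
  (intervalIntegral.intervalIntegrable_rpow' (by norm_num : -1 < -(1 / 2 : ℝ))).congr
    fun t ht => (inv_sqrt_eq_rpow (by rw [uIoc_of_le hx] at ht; exact ht.1.le)).symm

theorem intervalIntegral_inv_sqrt {x : ℝ} (hx : 0 ≤ x) :
    ∫ t in (0 : ℝ)..x, (√t)⁻¹ = 2 * √x := by
  rw [intervalIntegral.integral_congr (g := fun t => t ^ (-(1 / 2) : ℝ))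
    (fun t ht => inv_sqrt_eq_rpow (by rw [uIcc_of_le hx] at ht; exact ht.1)),
    integral_rpow (Or.inl (by norm_num)), sqrt_eq_rpow]
  norm_num
  ring

theorem integrableOn_Ico_inv_sqrt_sub {c r : ℝ} (hcr : c ≤ r) :
    IntegrableOn (fun u => (√(r - u))⁻¹) (Ico c r) := by
  rw [← intervalIntegrable_iff_integrableOn_Ico_of_le hcr]
  simpa using ((intervalIntegrable_inv_sqrt (sub_nonneg.mpr hcr)).comp_sub_left r).symm

theorem integral_Ico_inv_sqrt_sub {c r : ℝ} (hcr : c ≤ r) :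
    ∫ u in Ico c r, (√(r - u))⁻¹ = 2 * √(r - c) := by
  rw [integral_Ico_eq_integral_Ioo, ← integral_Ioc_eq_integral_Ioo,
    ← intervalIntegral.integral_of_le hcr, intervalIntegral.integral_comp_sub_left
      (fun t => (√t)⁻¹), sub_self, intervalIntegral_inv_sqrt (sub_nonneg.mpr hcr)]

theorem integrableOn_Ico_and_abs_integral_le_of_abs_le_inv_sqrt {f : ℝ → ℝ} {c r M : ℝ}
    (hcr : c ≤ r) (hf : AEStronglyMeasurable f (volume.restrict (Ico c r)))
    (hfM : ∀ u ∈ Ico c r, |f u| ≤ M * (√(r - u))⁻¹) :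
    IntegrableOn f (Ico c r) ∧ |∫ u in Ico c r, f u| ≤ 2 * M * √(r - c) := by
  have hbound : IntegrableOn (fun u => M * (√(r - u))⁻¹) (Ico c r) :=
    (integrableOn_Ico_inv_sqrt_sub hcr).const_mul M
  have hfM' : ∀ᵐ u ∂volume.restrict (Ico c r), ‖f u‖ ≤ M * (√(r - u))⁻¹ :=
    (ae_restrict_iff' measurableSet_Ico).mpr (ae_of_all _ hfM)
  refine ⟨hbound.mono' hf hfM', ?_⟩
  calc |∫ u in Ico c r, f u| ≤ ∫ u in Ico c r, M * (√(r - u))⁻¹ :=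
        norm_integral_le_of_norm_le hbound hfM'
    _ = 2 * M * √(r - c) := by
        rw [integral_const_mul, integral_Ico_inv_sqrt_sub hcr]; ring

/-- A form of the second mean value theorem for integrals. -/
theorem abs_integral_mul_deriv_le_two_mul {g g' F f : ℝ → ℝ} {a b M : ℝ} (hab : a ≤ b)
    (hg : ∀ x ∈ Icc a b, HasDerivAt g (g' x) x) (hg'_nonneg : ∀ x ∈ Icc a b, 0 ≤ g' x)
    (hg' : IntervalIntegrable g' volume a b) (hga : 0 ≤ g a)
    (hF : ∀ x ∈ Icc a b, HasDerivAt F (f x) x) (hf : IntervalIntegrable f volume a b)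
    (hFM : ∀ x ∈ Icc a b, |F x| ≤ M) :
    |∫ x in a..b, g x * f x| ≤ 2 * M * g b := by
  rw [← uIcc_of_le hab] at hg hF
  have hgb : g b - g a = ∫ x in a..b, g' x :=
    (intervalIntegral.integral_eq_sub_of_hasDerivAt hg hg').symm
  have hga_b : g a ≤ g b := by
    rw [← sub_nonneg, hgb]; exact intervalIntegral.integral_nonneg hab hg'_nonneg
  have hgF : ∀ x ∈ Icc a b, 0 ≤ g x → |g x * F x| ≤ M * g x := fun x hx hgx => by
    rw [abs_mul, abs_of_nonneg hgx, mul_comm]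
    exact mul_le_mul_of_nonneg_right (hFM x hx) hgx
  have hrest : |∫ x in a..b, g' x * F x| ≤ M * (g b - g a) := by
    rw [hgb, ← intervalIntegral.integral_const_mul, ← Real.norm_eq_abs]
    refine intervalIntegral.norm_integral_le_of_norm_le hab (ae_of_all _ fun x hx => ?_)
      (hg'.const_mul M)
    have hg'x := hg'_nonneg x (Ioc_subset_Icc_self hx)
    rw [Real.norm_eq_abs, abs_mul, abs_of_nonneg hg'x, mul_comm]
    exact mul_le_mul_of_nonneg_right (hFM x (Ioc_subset_Icc_self hx)) hg'x
  rw [intervalIntegral.integral_mul_deriv_eq_deriv_mul hg hF hg' hf]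
  calc |g b * F b - g a * F a - ∫ x in a..b, g' x * F x|
      ≤ |g b * F b| + |g a * F a| + |∫ x in a..b, g' x * F x| :=
        (abs_sub _ _).trans (by gcongr; exact abs_sub _ _)
    _ ≤ M * g b + M * g a + M * (g b - g a) := by
        gcongr
        exacts [hgF b ⟨hab, le_rfl⟩ (hga.trans hga_b), hgF a ⟨le_rfl, hab⟩ hga]
    _ = 2 * M * g b := by ring

section CoshKernel

variable {r lam : ℝ}

theorem continuousOn_cos_div_sqrt_cosh_sub_cosh :
    ContinuousOn (fun u => cos (lam * u) / √(cosh r - cosh u)) (Ioo (-r) r) :=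
  ContinuousOn.div (by fun_prop) (by fun_prop) fun _ hu =>
    (sqrt_pos.mpr (cosh_sub_cosh_pos (abs_lt.mpr hu))).ne'

theorem abs_intervalIntegral_cos_div_sqrt_cosh_sub_cosh_le {s : ℝ} (hlam : 0 < lam)
    (hs : 0 ≤ s) (hsr : s < r) :
    |∫ u in (0 : ℝ)..s, cos (lam * u) / √(cosh r - cosh u)|
      ≤ 2 / lam * (√(cosh r - cosh s))⁻¹ := by
  have hlt : ∀ u ∈ Icc 0 s, |u| < r := fun u hu => by
    rw [abs_of_nonneg hu.1]; exact hu.2.trans_lt hsr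
  have hsin : ∀ u, HasDerivAt (fun v => sin (lam * v) / lam) (cos (lam * u)) u := fun u => by
    simpa [mul_div_cancel_right₀ _ hlam.ne'] using
      ((hasDerivAt_id u).const_mul lam).sin.div_const lam
  have hg'cont : ContinuousOn (fun u => sinh u / (2 * √(cosh r - cosh u) ^ 3)) (Icc 0 s) :=
    ContinuousOn.div (by fun_prop) (by fun_prop) fun u hu => by
      have := cosh_sub_cosh_pos (hlt u hu); positivity
  simp_rw [div_eq_inv_mul (cos _)]
  convert abs_integral_mul_deriv_le_two_mul hs
    (fun u hu => hasDerivAt_inv_sqrt_cosh_sub_cosh (hlt u hu))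
    (fun u hu => by
      have := cosh_sub_cosh_pos (hlt u hu); have := sinh_nonneg_iff.mpr hu.1; positivity)
    (hg'cont.intervalIntegrable_of_Icc hs) (by positivity)
    (fun u _ => hsin u) (by apply Continuous.intervalIntegrable; fun_prop) (M := 1 / lam)
    (fun u _ => ?_) using 1
  · ring
  · rw [abs_div, abs_of_pos hlam]
    gcongr
    exact abs_sin_le_one _

theorem integrableOn_and_abs_integral_cos_div_sqrt_cosh_sub_cosh_tail_le (hr : 1 ≤ r) :
    IntegrableOn (fun u => cos (lam * u) / √(cosh r - cosh u)) (Ico (r - 1) r) ∧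
      |∫ u in Ico (r - 1) r, cos (lam * u) / √(cosh r - cosh u)|
        ≤ 2 * (2 * exp (1 / 4) * exp (-r / 2)) := by
  have hsub : Ico (r - 1) r ⊆ Ioo (-r) r := fun u hu => ⟨by linarith [hu.1], hu.2⟩
  have h := integrableOn_Ico_and_abs_integral_le_of_abs_le_inv_sqrt (by linarith)
    ((continuousOn_cos_div_sqrt_cosh_sub_cosh (lam := lam)).mono hsub
      |>.aestronglyMeasurable measurableSet_Ico)
    fun u hu => by
      rw [abs_div, abs_of_nonneg (sqrt_nonneg _), div_eq_mul_inv]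
      exact (mul_le_of_le_one_left (by positivity) (abs_cos_le_one _)).trans
        (inv_sqrt_cosh_sub_cosh_le hr hu.1 hu.2)
  rwa [sub_sub_cancel, sqrt_one, mul_one] at h

theorem integrableOn_and_abs_integral_cos_div_sqrt_cosh_sub_cosh_le (hr : 1 ≤ r)
    (hlam : 0 < lam) :
    IntegrableOn (fun u => cos (lam * u) / √(cosh r - cosh u)) (Ico 0 r) ∧
      |∫ u in Ico 0 r, cos (lam * u) / √(cosh r - cosh u)|
        ≤ 2 * (1 / lam + 1) * (2 * exp (1 / 4) * exp (-r / 2)) := by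
  set f := fun u => cos (lam * u) / √(cosh r - cosh u)
  set K := 2 * exp (1 / 4) * exp (-r / 2)
  have hunion : Ico 0 (r - 1) ∪ Ico (r - 1) r = Ico 0 r :=
    Ico_union_Ico_eq_Ico (by linarith) (by linarith)
  have hsub : Icc 0 (r - 1) ⊆ Ioo (-r) r := fun u hu =>
    ⟨by linarith [hu.1], by linarith [hu.2]⟩
  have hhead_int : IntegrableOn f (Ico 0 (r - 1)) :=
    (continuousOn_cos_div_sqrt_cosh_sub_cosh.mono hsub).integrableOn_Icc.mono_set
      Ico_subset_Icc_self
  obtain ⟨htail_int, htail⟩ :=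
    integrableOn_and_abs_integral_cos_div_sqrt_cosh_sub_cosh_tail_le (lam := lam) hr
  have hhead : |∫ u in (0 : ℝ)..(r - 1), f u| ≤ 2 / lam * K := by
    refine (abs_intervalIntegral_cos_div_sqrt_cosh_sub_cosh_le hlam (by linarith)
      (by linarith : r - 1 < r)).trans ?_
    have hK := inv_sqrt_cosh_sub_cosh_le hr le_rfl (by linarith : r - 1 < r)
    rw [sub_sub_cancel, sqrt_one, inv_one, mul_one] at hK
    gcongr
  have hsplit :
      ∫ u in Ico 0 r, f u = (∫ u in (0 : ℝ)..(r - 1), f u) + ∫ u in Ico (r - 1) r, f u := by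
    rw [← hunion, setIntegral_union Ico_disjoint_Ico_same measurableSet_Ico hhead_int htail_int,
      intervalIntegral.integral_of_le (by linarith), integral_Ioc_eq_integral_Ioo,
      integral_Ico_eq_integral_Ioo]
  refine ⟨hunion ▸ hhead_int.union htail_int, ?_⟩
  calc |∫ u in Ico 0 r, f u|
      ≤ |∫ u in (0 : ℝ)..(r - 1), f u| + |∫ u in Ico (r - 1) r, f u| :=
        hsplit ▸ abs_add_le _ _
    _ ≤ 2 / lam * K + 2 * K := add_le_add hhead htail
    _ = 2 * (1 / lam + 1) * K := by ring

end CoshKernel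

theorem stmt_2_general (a b : ℝ) (ha : 0 < a) :
    ∃ C > 0, ∀ r : ℝ, 1 < r → ∀ lam ∈ Set.Icc a b,
      IntegrableOn (fun u : ℝ => Real.cos (lam * u) / Real.sqrt (Real.cosh r - Real.cosh u))
        (Set.Ico 0 r) volume ∧
      |∫ u in Set.Ico (0:ℝ) r,
          Real.cos (lam * u) / Real.sqrt (Real.cosh r - Real.cosh u)|
        ≤ C * Real.exp (-r / 2) := by
  refine ⟨4 * exp (1 / 4) * (1 / a + 1), by positivity, fun r hr lam hlam => ?_⟩
  have hlam0 : 0 < lam := ha.trans_le hlam.1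
  obtain ⟨hint, hbound⟩ :=
    integrableOn_and_abs_integral_cos_div_sqrt_cosh_sub_cosh_le hr.le hlam0
  refine ⟨hint, hbound.trans ?_⟩
  calc 2 * (1 / lam + 1) * (2 * exp (1 / 4) * exp (-r / 2))
      ≤ 2 * (1 / a + 1) * (2 * exp (1 / 4) * exp (-r / 2)) := by gcongr; exact hlam.1
    _ = 4 * exp (1 / 4) * (1 / a + 1) * exp (-r / 2) := by ring

/-- Uniform decay of the oscillatory integral ∫_0^r cos(λu)(cosh r − cosh u)^{−1/2} du. -/
theorem stmt_2 (a b : ℝ) (ha : 0 < a) (hab : a ≤ b) :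
    ∃ C > 0, ∀ r : ℝ, 1 < r → ∀ lam ∈ Set.Icc a b,
      IntegrableOn (fun u : ℝ => Real.cos (lam * u) / Real.sqrt (Real.cosh r - Real.cosh u))
        (Set.Ico 0 r) volume ∧
      |∫ u in Set.Ico (0:ℝ) r,
          Real.cos (lam * u) / Real.sqrt (Real.cosh r - Real.cosh u)|
        ≤ C * Real.exp (-r / 2) :=
  stmt_2_general a b ha
end

section
/- For every λ₀ > 0 there exists a constant C > 0 such that for all r > 1 and all λ ≥ λ₀, |∫_0^{r−1} cos(λu) · ρ_r(u) du| ≤ C, where ρ_r(u) = (1 − e^{−(r+u)})^{−1/2} · (1 − e^{−(r−u)})^{−1/2}. In fact one may take C = (1/λ₀)·((1/2)·e^{−1}·(1−e^{−1})^{−2} + (1−e^{−1})^{−1}). -/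
open Real Set intervalIntegral MeasureTheory
open scoped Interval

/-!
Write cos(λu) = (d/du)(sin(λu)/λ) and integrate by parts against ρ_r. The boundary term at 0
vanishes and the one at r - 1 is at most ρ_r(r - 1)/λ ≤ (1 - e⁻¹)⁻¹/λ. With
g(t) = (1 - e^{-t})^{-1/2}, so that ρ_r(u) = g(r + u) g(r - u), g is decreasing with
g' = -(e^{-t}/2) g³; hence on [0, r - 1] both arguments are ≥ 1 and
|ρ_r'(u)| ≤ (g(1)⁴/2)(e^{-(r+u)} + e^{-(r-u)}), whose integral over [0, r - 1] is at most
g(1)⁴ e⁻¹/2. Both bounds are independent of r and decrease in λ.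
-/

theorem abs_integral_cos_mul_le_of_hasDerivAt {f f' : ℝ → ℝ} {b lam : ℝ} (hb : 0 ≤ b)
    (hlam : 0 < lam) (hf : ∀ u ∈ [[0, b]], HasDerivAt f (f' u) u)
    (hf' : IntervalIntegrable f' volume 0 b) :
    |∫ u in 0..b, cos (lam * u) * f u| ≤ (|f b| + ∫ u in 0..b, |f' u|) / lam := by
  have hsin : ∀ u ∈ [[0, b]], HasDerivAt (fun u ↦ sin (lam * u) / lam) (cos (lam * u)) u := by
    intro u _
    have := (((hasDerivAt_id u).const_mul lam).sin).div_const lam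
    rwa [mul_one, mul_div_cancel_right₀ _ hlam.ne'] at this
  have hibp := intervalIntegral.integral_mul_deriv_eq_deriv_mul hf hsin hf'
    ((by fun_prop : Continuous fun u ↦ cos (lam * u)).intervalIntegrable 0 b)
  have hsin_le : ∀ u, |sin (lam * u) / lam| ≤ 1 / lam := fun u ↦ by
    rw [abs_div, abs_of_pos hlam]; gcongr; exact abs_sin_le_one _
  have hrem : |∫ u in 0..b, f' u * (sin (lam * u) / lam)| ≤ (∫ u in 0..b, |f' u|) / lam := by
    calc |∫ u in 0..b, f' u * (sin (lam * u) / lam)|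
        ≤ ∫ u in 0..b, |f' u * (sin (lam * u) / lam)| := abs_integral_le_integral_abs hb
      _ ≤ ∫ u in 0..b, |f' u| * (1 / lam) := by
          refine integral_mono_on hb ?_ (hf'.abs.mul_const _) fun u _ ↦ ?_
          · exact (hf'.mul_continuousOn (by fun_prop)).abs
          · rw [abs_mul]; exact mul_le_mul_of_nonneg_left (hsin_le u) (abs_nonneg _)
      _ = (∫ u in 0..b, |f' u|) / lam := by rw [intervalIntegral.integral_mul_const]; ring
  simp_rw [mul_comm (cos _)]
  rw [hibp, mul_zero, sin_zero, zero_div, mul_zero, sub_zero, add_div]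
  calc |f b * (sin (lam * b) / lam) - ∫ u in 0..b, f' u * (sin (lam * u) / lam)|
      ≤ |f b * (sin (lam * b) / lam)| + |∫ u in 0..b, f' u * (sin (lam * u) / lam)| :=
        abs_sub _ _
    _ ≤ |f b| * (1 / lam) + (∫ u in 0..b, |f' u|) / lam := by
        rw [abs_mul]; gcongr; exact hsin_le b
    _ = |f b| / lam + (∫ u in 0..b, |f' u|) / lam := by ring

noncomputable def invSqrtOneSubExp (t : ℝ) : ℝ := (√(1 - exp (-t)))⁻¹

theorem one_sub_exp_neg_pos {t : ℝ} (ht : 0 < t) : 0 < 1 - exp (-t) :=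
  sub_pos.2 (exp_lt_one_iff.2 (neg_lt_zero.2 ht))

theorem invSqrtOneSubExp_nonneg (t : ℝ) : 0 ≤ invSqrtOneSubExp t :=
  inv_nonneg.2 (sqrt_nonneg _)

theorem invSqrtOneSubExp_sq {t : ℝ} (ht : 0 < t) :
    invSqrtOneSubExp t ^ 2 = (1 - exp (-t))⁻¹ := by
  rw [invSqrtOneSubExp, inv_pow, sq_sqrt (one_sub_exp_neg_pos ht).le]

theorem invSqrtOneSubExp_le {t : ℝ} (ht : 1 ≤ t) : invSqrtOneSubExp t ≤ invSqrtOneSubExp 1 :=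
  inv_anti₀ (sqrt_pos.2 (one_sub_exp_neg_pos one_pos))
    (sqrt_le_sqrt (by gcongr))

theorem hasDerivAt_invSqrtOneSubExp {t : ℝ} (ht : 0 < t) :
    HasDerivAt invSqrtOneSubExp (-(exp (-t) / 2) * invSqrtOneSubExp t ^ 3) t := by
  have hpos := one_sub_exp_neg_pos ht
  have hbase : HasDerivAt (fun t ↦ 1 - exp (-t)) (exp (-t)) t := by
    simpa using ((hasDerivAt_neg' t).exp).const_sub 1
  refine ((hbase.sqrt hpos.ne').inv (sqrt_pos.2 hpos).ne').congr_deriv ?_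
  rw [invSqrtOneSubExp]
  field_simp

noncomputable def rho (r u : ℝ) : ℝ := invSqrtOneSubExp (r + u) * invSqrtOneSubExp (r - u)

noncomputable def rhoDeriv (r u : ℝ) : ℝ :=
  exp (-(r - u)) / 2 * invSqrtOneSubExp (r + u) * invSqrtOneSubExp (r - u) ^ 3
    - exp (-(r + u)) / 2 * invSqrtOneSubExp (r + u) ^ 3 * invSqrtOneSubExp (r - u)

theorem hasDerivAt_rho {r u : ℝ} (hadd : 0 < r + u) (hsub : 0 < r - u) :
    HasDerivAt (rho r) (rhoDeriv r u) u := by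
  have h₁ := (hasDerivAt_invSqrtOneSubExp hadd).comp u ((hasDerivAt_id' u).const_add r)
  have h₂ := (hasDerivAt_invSqrtOneSubExp hsub).comp u ((hasDerivAt_id' u).const_sub r)
  exact (h₁.mul h₂).congr_deriv (by simp only [rhoDeriv, Function.comp_apply]; ring)

theorem continuousOn_rhoDeriv (r : ℝ) : ContinuousOn (rhoDeriv r) (Icc 0 (r - 1)) := by
  have hg : ∀ t, 0 < t → ContinuousAt invSqrtOneSubExp t :=
    fun t ht ↦ (hasDerivAt_invSqrtOneSubExp ht).continuousAt
  intro u hu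
  have hadd : ContinuousAt (fun u ↦ invSqrtOneSubExp (r + u)) u :=
    (hg _ (by linarith [hu.1, hu.2])).comp (by fun_prop)
  have hsub : ContinuousAt (fun u ↦ invSqrtOneSubExp (r - u)) u :=
    (hg _ (by linarith [hu.1, hu.2])).comp (by fun_prop)
  unfold rhoDeriv
  fun_prop

theorem abs_rho_le {r u : ℝ} (hu : u ∈ Icc 0 (r - 1)) : |rho r u| ≤ invSqrtOneSubExp 1 ^ 2 := by
  rw [rho, abs_mul, abs_of_nonneg (invSqrtOneSubExp_nonneg _),
    abs_of_nonneg (invSqrtOneSubExp_nonneg _), sq]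
  exact mul_le_mul (invSqrtOneSubExp_le (by linarith [hu.1, hu.2]))
    (invSqrtOneSubExp_le (by linarith [hu.1, hu.2])) (invSqrtOneSubExp_nonneg _)
    (invSqrtOneSubExp_nonneg _)

theorem abs_rhoDeriv_le {r u : ℝ} (hu : u ∈ Icc 0 (r - 1)) :
    |rhoDeriv r u| ≤ invSqrtOneSubExp 1 ^ 4 / 2 * (exp (-(r + u)) + exp (-(r - u))) := by
  obtain ⟨hg₀, hgadd, hgsub⟩ : 0 ≤ invSqrtOneSubExp 1 ∧
      invSqrtOneSubExp (r + u) ≤ invSqrtOneSubExp 1 ∧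
      invSqrtOneSubExp (r - u) ≤ invSqrtOneSubExp 1 :=
    ⟨invSqrtOneSubExp_nonneg 1, invSqrtOneSubExp_le (by linarith [hu.1, hu.2]),
      invSqrtOneSubExp_le (by linarith [hu.1, hu.2])⟩
  have hadd₀ := invSqrtOneSubExp_nonneg (r + u)
  have hsub₀ := invSqrtOneSubExp_nonneg (r - u)
  have h₁ : exp (-(r - u)) / 2 * invSqrtOneSubExp (r + u) * invSqrtOneSubExp (r - u) ^ 3
      ≤ invSqrtOneSubExp 1 ^ 4 / 2 * exp (-(r - u)) := by
    calc _ ≤ exp (-(r - u)) / 2 * invSqrtOneSubExp 1 * invSqrtOneSubExp 1 ^ 3 := by gcongr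
      _ = _ := by ring
  have h₂ : exp (-(r + u)) / 2 * invSqrtOneSubExp (r + u) ^ 3 * invSqrtOneSubExp (r - u)
      ≤ invSqrtOneSubExp 1 ^ 4 / 2 * exp (-(r + u)) := by
    calc _ ≤ exp (-(r + u)) / 2 * invSqrtOneSubExp 1 ^ 3 * invSqrtOneSubExp 1 := by gcongr
      _ = _ := by ring
  have h₁₀ : 0 ≤ exp (-(r - u)) / 2 * invSqrtOneSubExp (r + u) * invSqrtOneSubExp (r - u) ^ 3 := by
    positivity
  have h₂₀ : 0 ≤ exp (-(r + u)) / 2 * invSqrtOneSubExp (r + u) ^ 3 * invSqrtOneSubExp (r - u) := by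
    positivity
  rw [rhoDeriv, abs_le]
  constructor <;> linarith

theorem integral_exp_neg_add_exp_neg_le {r : ℝ} :
    ∫ u in 0..r - 1, (exp (-(r + u)) + exp (-(r - u))) ≤ exp (-1) := by
  have hderiv : ∀ u ∈ [[0, r - 1]], HasDerivAt (fun u ↦ exp (-(r - u)) - exp (-(r + u)))
      (exp (-(r + u)) + exp (-(r - u))) u := fun u _ ↦ by
    have hsub : HasDerivAt (fun u ↦ -(r - u)) 1 u :=
      ((hasDerivAt_id' u).const_sub r).neg.congr_deriv (neg_neg 1)
    have hadd : HasDerivAt (fun u ↦ -(r + u)) (-1) u := ((hasDerivAt_id' u).const_add r).neg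
    exact (hsub.exp.sub hadd.exp).congr_deriv (by ring)
  rw [integral_eq_sub_of_hasDerivAt hderiv (by apply Continuous.intervalIntegrable; fun_prop)]
  ring_nf
  linarith [exp_pos (1 - r * 2)]

theorem abs_integral_cos_mul_rho_le {r lam : ℝ} (hr : 1 ≤ r) (hlam : 0 < lam) :
    |∫ u in 0..r - 1, cos (lam * u) * rho r u| ≤
      (1 / lam) * ((1 / 2) * exp (-1) * ((1 - exp (-1)) ^ 2)⁻¹ + (1 - exp (-1))⁻¹) := by
  have hb : 0 ≤ r - 1 := by linarith
  have hIcc : [[0, r - 1]] = Icc 0 (r - 1) := uIcc_of_le hb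
  have hderiv : ∀ u ∈ [[0, r - 1]], HasDerivAt (rho r) (rhoDeriv r u) u := fun u hu ↦ by
    rw [hIcc] at hu
    exact hasDerivAt_rho (by linarith [hu.1, hu.2]) (by linarith [hu.1, hu.2])
  have hint : IntervalIntegrable (rhoDeriv r) volume 0 (r - 1) :=
    (hIcc ▸ continuousOn_rhoDeriv r).intervalIntegrable
  have hboundary : |rho r (r - 1)| ≤ invSqrtOneSubExp 1 ^ 2 := abs_rho_le ⟨hb, le_rfl⟩
  have hremainder : ∫ u in 0..r - 1, |rhoDeriv r u| ≤ invSqrtOneSubExp 1 ^ 4 / 2 * exp (-1) :=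
    calc ∫ u in 0..r - 1, |rhoDeriv r u|
        ≤ ∫ u in 0..r - 1, invSqrtOneSubExp 1 ^ 4 / 2 * (exp (-(r + u)) + exp (-(r - u))) :=
          integral_mono_on hb hint.abs (by apply Continuous.intervalIntegrable; fun_prop)
            fun u hu ↦ abs_rhoDeriv_le hu
      _ ≤ invSqrtOneSubExp 1 ^ 4 / 2 * exp (-1) := by
          rw [intervalIntegral.integral_const_mul]
          gcongr
          exact integral_exp_neg_add_exp_neg_le
  have hsq : invSqrtOneSubExp 1 ^ 2 = (1 - exp (-1))⁻¹ := invSqrtOneSubExp_sq one_pos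
  have hfourth : invSqrtOneSubExp 1 ^ 4 = ((1 - exp (-1)) ^ 2)⁻¹ := by
    rw [show 4 = 2 * 2 from rfl, pow_mul, hsq, inv_pow]
  calc _ ≤ (|rho r (r - 1)| + ∫ u in 0..r - 1, |rhoDeriv r u|) / lam :=
        abs_integral_cos_mul_le_of_hasDerivAt hb hlam hderiv hint
    _ ≤ (invSqrtOneSubExp 1 ^ 2 + invSqrtOneSubExp 1 ^ 4 / 2 * exp (-1)) / lam := by gcongr
    _ = _ := by rw [hsq, hfourth]; ring

/-- Integration-by-parts bound, uniform in r > 1 and λ ≥ λ₀, for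
    ∫_0^{r−1} cos(λu) ρ_r(u) du with ρ_r(u) = (1−e^{−(r+u)})^{−1/2}(1−e^{−(r−u)})^{−1/2};
    one may take C = (1/λ₀)((1/2)e^{−1}(1−e^{−1})^{−2} + (1−e^{−1})^{−1}). -/
theorem stmt_13 (lam₀ : ℝ) (hlam₀ : 0 < lam₀) :
    ∃ C > 0,
      C = (1 / lam₀) * ((1 / 2) * Real.exp (-1) * ((1 - Real.exp (-1)) ^ 2)⁻¹
            + (1 - Real.exp (-1))⁻¹) ∧
      ∀ r : ℝ, 1 < r → ∀ lam : ℝ, lam₀ ≤ lam →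
        |∫ u in (0:ℝ)..(r - 1), Real.cos (lam * u) *
            ((Real.sqrt (1 - Real.exp (-(r + u))))⁻¹ *
              (Real.sqrt (1 - Real.exp (-(r - u))))⁻¹)| ≤ C := by
  have hK := one_sub_exp_neg_pos one_pos
  refine ⟨_, by positivity, rfl, fun r hr lam hlam ↦ ?_⟩
  refine (abs_integral_cos_mul_rho_le hr.le (hlam₀.trans_le hlam)).trans ?_
  gcongr
end

section
/- Let 0 < σ ≤ t, let C ≥ 0, let χ : [0,∞) → [0,1] be measurable, and let J : [t−σ, t] → ℝ be measurable with |J(r)| ≤ C·e^{−r/2} for all r ∈ [t−σ, t]. Then |2·√(2/cosh t) · ∫_{t−σ}^{t} (χ(r) − 1) · sinh r · J(r) dr| ≤ 4·C·(1 − e^{−σ/2}). -/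
/-!
Since `|χ - 1| ≤ 1`, `sinh r ≤ eʳ/2` and `|J r| ≤ C e^{-r/2}`, the integrand is bounded by
`(C/2) e^{r/2}`, whose integral over `[t - σ, t]` is `C (e^{t/2} - e^{(t-σ)/2})`. The prefactor
satisfies `√(2 / cosh t) ≤ 2 e^{-t/2}` because `cosh t ≥ eᵗ/2`, and multiplying out gives the bound.
-/

open Real Set intervalIntegral MeasureTheory

lemma Real.sinh_le_exp_div_two (r : ℝ) : sinh r ≤ exp r / 2 := by
  rw [sinh_eq]
  linarith [exp_pos (-r)]

lemma Real.exp_div_two_le_cosh (t : ℝ) : exp t / 2 ≤ cosh t := by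
  rw [cosh_eq]
  linarith [exp_pos (-t)]

lemma Real.sqrt_two_div_cosh_le (t : ℝ) : √(2 / cosh t) ≤ 2 * exp (-t / 2) := by
  have hsq : (2 * exp (-t / 2)) ^ 2 = 4 * exp (-t) := by
    rw [mul_pow, ← exp_nat_mul]
    ring_nf
  have hle : 2 / cosh t ≤ 4 * exp (-t) := by
    rw [div_le_iff₀ (cosh_pos t), exp_neg]
    have := exp_div_two_le_cosh t
    have := exp_pos t
    calc (2 : ℝ) = 4 * (exp t)⁻¹ * (exp t / 2) := by field_simp; norm_num
      _ ≤ 4 * (exp t)⁻¹ * cosh t := by gcongr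
  calc √(2 / cosh t) ≤ √((2 * exp (-t / 2)) ^ 2) := sqrt_le_sqrt (hsq ▸ hle)
    _ = 2 * exp (-t / 2) := sqrt_sq (by positivity)

lemma integral_exp_div_two (a b : ℝ) :
    ∫ r in a..b, exp (r / 2) = 2 * (exp (b / 2) - exp (a / 2)) := by
  rw [intervalIntegral.integral_comp_div exp two_ne_zero, integral_exp, smul_eq_mul]

lemma abs_integral_mul_sinh_mul_le {a b C : ℝ} (ha : 0 ≤ a) (hab : a ≤ b) {f J : ℝ → ℝ}
    (hf : ∀ r ∈ Icc a b, |f r| ≤ 1) (hJ : ∀ r ∈ Icc a b, |J r| ≤ C * exp (-r / 2)) :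
    |∫ r in a..b, f r * sinh r * J r| ≤ C * (exp (b / 2) - exp (a / 2)) := by
  have hpoint : ∀ r ∈ Ioc a b, ‖f r * sinh r * J r‖ ≤ C / 2 * exp (r / 2) := by
    intro r hr
    have hr' : r ∈ Icc a b := Ioc_subset_Icc_self hr
    have hsinh : |sinh r| ≤ exp r / 2 := by
      rw [abs_of_nonneg (sinh_nonneg_iff.2 (ha.trans hr'.1))]
      exact sinh_le_exp_div_two r
    have hexp : exp r * exp (-r / 2) = exp (r / 2) := by
      rw [← exp_add]; ring_nf
    calc ‖f r * sinh r * J r‖ = |f r| * |sinh r| * |J r| := by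
          rw [norm_eq_abs, abs_mul, abs_mul]
      _ ≤ 1 * (exp r / 2) * (C * exp (-r / 2)) := by
          gcongr
          exacts [hf r hr', hJ r hr']
      _ = C / 2 * exp (r / 2) := by linear_combination C / 2 * hexp
  calc |∫ r in a..b, f r * sinh r * J r|
      ≤ ∫ r in a..b, C / 2 * exp (r / 2) :=
        norm_integral_le_of_norm_le hab (ae_of_all _ hpoint)
          ((by fun_prop : Continuous _).intervalIntegrable _ _)
    _ = C * (exp (b / 2) - exp (a / 2)) := by
        rw [intervalIntegral.integral_const_mul, integral_exp_div_two]
        ring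

theorem stmt_15_general (σ t C : ℝ) (hσ : 0 < σ) (hσt : σ ≤ t)
    (χ : ℝ → ℝ) (hχ : ∀ x, 0 ≤ χ x ∧ χ x ≤ 1)
    (J : ℝ → ℝ)
    (hJ : ∀ r ∈ Set.Icc (t - σ) t, |J r| ≤ C * Real.exp (-r / 2)) :
    |2 * Real.sqrt (2 / Real.cosh t) *
        ∫ r in (t - σ)..t, (χ r - 1) * Real.sinh r * J r|
      ≤ 4 * C * (1 - Real.exp (-σ / 2)) := by
  have hχ1 : ∀ r ∈ Icc (t - σ) t, |χ r - 1| ≤ 1 := fun r _ ↦ by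
    rw [abs_le]; constructor <;> linarith [hχ r]
  have hI := abs_integral_mul_sinh_mul_le (by linarith) (by linarith) hχ1 hJ
  have hpre := sqrt_two_div_cosh_le t
  have hexp : exp (-t / 2) * exp ((t - σ) / 2) = exp (-σ / 2) := by
    rw [← exp_add]; ring_nf
  have hexp' : exp (-t / 2) * exp (t / 2) = 1 := by
    rw [← exp_add]; ring_nf; exact exp_zero
  calc _ = 2 * √(2 / cosh t) * |∫ r in (t - σ)..t, (χ r - 1) * sinh r * J r| := by
        rw [abs_mul, abs_of_nonneg (by positivity)]
    _ ≤ 2 * (2 * exp (-t / 2)) * (C * (exp (t / 2) - exp ((t - σ) / 2))) := by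
        gcongr
    _ = 4 * C * (1 - exp (-σ / 2)) := by linear_combination 4 * C * (hexp' - hexp)

/-- Bound on the error term δh_{t,σ} between the smoothed and sharp Selberg transforms. -/
theorem stmt_15 (σ t C : ℝ) (hσ : 0 < σ) (hσt : σ ≤ t) (hC : 0 ≤ C)
    (χ : ℝ → ℝ) (hχm : Measurable χ) (hχ : ∀ x, 0 ≤ χ x ∧ χ x ≤ 1)
    (J : ℝ → ℝ) (hJm : Measurable J)
    (hJ : ∀ r ∈ Set.Icc (t - σ) t, |J r| ≤ C * Real.exp (-r / 2)) :
    |2 * Real.sqrt (2 / Real.cosh t) *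
        ∫ r in (t - σ)..t, (χ r - 1) * Real.sinh r * J r|
      ≤ 4 * C * (1 - Real.exp (-σ / 2)) :=
  stmt_15_general σ t C hσ hσt χ hχ J hJ
end
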